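/- arXiv:1407.3221 — 6 statements merged into one kernel-verified Lean document; each statement's English description precedes it below -/
import Mathlib

section
/- Let (𝕀,⪯) be a finite partially ordered set with zeta matrix Z and Möbius matrix Z⁻¹. Let P ≥ 0 be a matrix indexed by 𝕀 × 𝕀 and let Q satisfy Qᵀ = Z⁻¹ P Z. If every column P(•,d), d ∈ 𝕀, belongs to the positive Möbius cone F₊(𝕀), then Q ≥ 0 entrywise and for every b ∈ 𝕀 the function a ↦ Q(a,b) is increasing: a₁ ⪯ a₂ implies Q(a₁,b) ≤ Q(a₂,b). -/
open Finset Matrix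

/-- Let `Z` be the zeta matrix of a finite poset, `M = Z⁻¹` its Möbius matrix,
`P ≥ 0` and `Qᵀ = Z⁻¹ P Z`. If every column of `P` lies in the positive Möbius
cone (`Z⁻¹ P(•,d) ≥ 0` for all `d`), then `Q ≥ 0` and `Q(a,b)` is increasing
in `a`: `a₁ ⪯ a₂` implies `Q(a₁,b) ≤ Q(a₂,b)`. -/
theorem zeta_dual_monotone {𝕀 : Type*} [Fintype 𝕀] [DecidableEq 𝕀] [PartialOrder 𝕀]
    [DecidableRel (· ≤ · : 𝕀 → 𝕀 → Prop)]
    (M : Matrix 𝕀 𝕀 ℝ)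
    (hMZ : M * (Matrix.of fun a b : 𝕀 => if a ≤ b then (1 : ℝ) else 0) = 1)
    (hZM : (Matrix.of fun a b : 𝕀 => if a ≤ b then (1 : ℝ) else 0) * M = 1)
    (P Q : Matrix 𝕀 𝕀 ℝ) (hP : ∀ a b, 0 ≤ P a b)
    (hQ : Qᵀ = M * P * (Matrix.of fun a b : 𝕀 => if a ≤ b then (1 : ℝ) else 0))
    (hcol : ∀ d : 𝕀, ∀ b : 𝕀, 0 ≤ M.mulVec (fun c => P c d) b) :
    (∀ a b, 0 ≤ Q a b) ∧
    ∀ b : 𝕀, ∀ a₁ a₂ : 𝕀, a₁ ≤ a₂ → Q a₁ b ≤ Q a₂ b := by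
  have key : ∀ a b, Q a b = ∑ d ∈ Finset.univ.filter (· ≤ a), (M * P) b d := by
    intro a b
    have h : Q a b = Qᵀ b a := rfl
    rw [h, hQ]
    simp [Matrix.mul_apply, Finset.sum_filter, mul_ite, mul_one, mul_zero]
  have hMP : ∀ b d, 0 ≤ (M * P) b d := by
    intro b d
    have := hcol d b
    simpa [Matrix.mulVec, Matrix.mul_apply, dotProduct] using this
  constructor
  · intro a b
    rw [key]
    exact Finset.sum_nonneg fun d _ => hMP b d
  · intro b a₁ a₂ h
    rw [key, key]
    apply Finset.sum_le_sum_of_subset_of_nonneg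
    · intro d hd
      simp only [Finset.mem_filter] at *
      exact ⟨hd.1, hd.2.trans h⟩
    · intro d _ _
      exact hMP b d
end

section
/- Let (𝕀,⪯) be a finite partially ordered set with zeta matrix Z and Möbius matrix Z⁻¹. Let P ≥ 0 be a matrix indexed by 𝕀 × 𝕀 and let Q satisfy Qᵀ = Z P Z⁻¹. If every row P(c,•), c ∈ 𝕀, belongs to the cone F′₊(𝕀), then Q ≥ 0 entrywise and for every a ∈ 𝕀 the function b ↦ Q(a,b) is decreasing: b₁ ⪯ b₂ implies Q(a,b₁) ≥ Q(a,b₂). -/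
open Finset Matrix

/-- Let `Z` be the zeta matrix of a finite poset, `M = Z⁻¹` its Möbius matrix,
`P ≥ 0` and `Qᵀ = Z P Z⁻¹`. If every row of `P` lies in the cone `F′₊(𝕀)`
(`(Z⁻¹)ᵀ P(c,•) ≥ 0` for all `c`), then `Q ≥ 0` and `Q(a,b)` is decreasing
in `b`: `b₁ ⪯ b₂` implies `Q(a,b₁) ≥ Q(a,b₂)`. -/
theorem moebius_dual_antitone {𝕀 : Type*} [Fintype 𝕀] [DecidableEq 𝕀]
    [PartialOrder 𝕀] [DecidableRel (· ≤ · : 𝕀 → 𝕀 → Prop)]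
    (M : Matrix 𝕀 𝕀 ℝ)
    (hMZ : M * (Matrix.of fun a b : 𝕀 => if a ≤ b then (1 : ℝ) else 0) = 1)
    (hZM : (Matrix.of fun a b : 𝕀 => if a ≤ b then (1 : ℝ) else 0) * M = 1)
    (P Q : Matrix 𝕀 𝕀 ℝ) (hP : ∀ a b, 0 ≤ P a b)
    (hQ : Qᵀ = (Matrix.of fun a b : 𝕀 => if a ≤ b then (1 : ℝ) else 0) * P * M)
    (hrow : ∀ c : 𝕀, ∀ a : 𝕀, 0 ≤ Mᵀ.mulVec (fun d => P c d) a) :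
    (∀ a b, 0 ≤ Q a b) ∧
    ∀ a : 𝕀, ∀ b₁ b₂ : 𝕀, b₁ ≤ b₂ → Q a b₂ ≤ Q a b₁ := by
  -- every entry of P * M is nonnegative
  have hPM : ∀ c a, 0 ≤ (P * M) c a := by
    intro c a
    have h := hrow c a
    have : Mᵀ.mulVec (fun d => P c d) a = (P * M) c a := by
      simp only [Matrix.mulVec, dotProduct, Matrix.transpose_apply,
        Matrix.mul_apply]
      exact Finset.sum_congr rfl fun d _ => mul_comm _ _
    rwa [this] at h
  -- key formula for Q
  have key : ∀ a b, Q a b = ∑ c ∈ Finset.univ.filter (fun c => b ≤ c),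
      (P * M) c a := by
    intro a b
    have h := congrFun (congrFun hQ b) a
    rw [Matrix.transpose_apply, Matrix.mul_assoc] at h
    rw [h, Matrix.mul_apply]
    rw [Finset.sum_filter]
    refine Finset.sum_congr rfl fun c _ => ?_
    by_cases hbc : b ≤ c <;> simp [Matrix.of_apply, hbc]
  constructor
  · intro a b
    rw [key]
    exact Finset.sum_nonneg fun c _ => hPM c a
  · intro a b₁ b₂ h12
    rw [key, key]
    refine Finset.sum_le_sum_of_subset_of_nonneg ?_ fun c _ _ => hPM c a
    intro c hc
    simp only [Finset.mem_filter, Finset.mem_univ, true_and] at hc ⊢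
    exact le_trans h12 hc
end

section
/- Let (𝕀,⪯) be a finite partially ordered set with zeta matrix Z and Möbius matrix Z⁻¹. Let P ≥ 0 be a matrix indexed by 𝕀 × 𝕀 such that every row P(c,•), c ∈ 𝕀, belongs to the cone F′₊(𝕀). If ρ : 𝕀 → ℝ is nonnegative and satisfies ρᵀ P = ρᵀ (in particular if P is stochastic and irreducible and ρ is its invariant distribution), then ρ ∈ F′₊(𝕀), i.e. (Z⁻¹)ᵀ ρ ≥ 0 componentwise. -/
open Finset Matrix

/-- Let `Z` be the zeta matrix of a finite poset, `M = Z⁻¹` its Möbius matrix, and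
`P ≥ 0` a matrix each of whose rows lies in the cone `F′₊(𝕀)`. If `ρ ≥ 0` satisfies
`ρᵀ P = ρᵀ` (in particular, if `ρ` is the invariant distribution of a stochastic
irreducible `P`), then `ρ ∈ F′₊(𝕀)`, i.e. `(Z⁻¹)ᵀ ρ ≥ 0` componentwise. -/
theorem invariant_in_cone {𝕀 : Type*} [Fintype 𝕀] [DecidableEq 𝕀]
    [PartialOrder 𝕀] [DecidableRel (· ≤ · : 𝕀 → 𝕀 → Prop)]
    (M : Matrix 𝕀 𝕀 ℝ)
    (hMZ : M * (Matrix.of fun a b : 𝕀 => if a ≤ b then (1 : ℝ) else 0) = 1)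
    (hZM : (Matrix.of fun a b : 𝕀 => if a ≤ b then (1 : ℝ) else 0) * M = 1)
    (P : Matrix 𝕀 𝕀 ℝ) (hP : ∀ a b, 0 ≤ P a b)
    (hrow : ∀ c : 𝕀, ∀ a : 𝕀, 0 ≤ Mᵀ.mulVec (fun d => P c d) a)
    (ρ : 𝕀 → ℝ) (hρ : ∀ a, 0 ≤ ρ a) (hinv : Matrix.vecMul ρ P = ρ) :
    ∀ a : 𝕀, 0 ≤ Mᵀ.mulVec ρ a := by
  intro a
  have key : Mᵀ.mulVec ρ a = ∑ c, ρ c * Mᵀ.mulVec (fun d => P c d) a := by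
    conv_lhs => rw [← hinv]
    simp only [Matrix.mulVec, Matrix.vecMul, dotProduct, Matrix.transpose_apply,
      Finset.mul_sum, Finset.sum_mul]
    rw [Finset.sum_comm]
    exact Finset.sum_congr rfl fun c _ => Finset.sum_congr rfl fun d _ => by ring
  rw [key]
  exact Finset.sum_nonneg fun c _ => mul_nonneg (hρ c) (hrow c a)
end

section
/- Let (𝕀,⪯) be a finite partially ordered set with zeta matrix Z and Möbius matrix Z⁻¹. Let P ≥ 0 be a matrix indexed by 𝕀 × 𝕀 such that every row P(c,•), c ∈ 𝕀, belongs to the cone F′₊(𝕀), and let Q satisfy Qᵀ = Z P Z⁻¹. If ρ̂ : 𝕀 → ℝ is nonnegative and satisfies ρ̂ᵀ Q = ρ̂ᵀ (in particular if Q is stochastic and irreducible and ρ̂ is its invariant distribution), then ρ̂ is decreasing: b₁ ⪯ b₂ implies ρ̂(b₁) ≥ ρ̂(b₂). -/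
open Finset Matrix

/-- Let `Z` be the zeta matrix of a finite poset, `M = Z⁻¹` its Möbius matrix,
`P ≥ 0` a matrix each of whose rows lies in the cone `F′₊(𝕀)`, and `Q` the
Möbius dual of `P`, i.e. `Qᵀ = Z P Z⁻¹`. If `ρ̂ ≥ 0` satisfies `ρ̂ᵀ Q = ρ̂ᵀ`
(in particular, if `ρ̂` is the invariant distribution of a stochastic irreducible
`Q`), then `ρ̂` is decreasing: `b₁ ⪯ b₂` implies `ρ̂(b₁) ≥ ρ̂(b₂)`. -/
theorem invariant_of_dual_antitone {𝕀 : Type*} [Fintype 𝕀] [DecidableEq 𝕀]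
    [PartialOrder 𝕀] [DecidableRel (· ≤ · : 𝕀 → 𝕀 → Prop)]
    (M : Matrix 𝕀 𝕀 ℝ)
    (hMZ : M * (Matrix.of fun a b : 𝕀 => if a ≤ b then (1 : ℝ) else 0) = 1)
    (hZM : (Matrix.of fun a b : 𝕀 => if a ≤ b then (1 : ℝ) else 0) * M = 1)
    (P Q : Matrix 𝕀 𝕀 ℝ) (hP : ∀ a b, 0 ≤ P a b)
    (hrow : ∀ c : 𝕀, ∀ a : 𝕀, 0 ≤ Mᵀ.mulVec (fun d => P c d) a)
    (hQ : Qᵀ = (Matrix.of fun a b : 𝕀 => if a ≤ b then (1 : ℝ) else 0) * P * M)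
    (ρ : 𝕀 → ℝ) (hρ : ∀ a, 0 ≤ ρ a) (hinv : Matrix.vecMul ρ Q = ρ) :
    ∀ b₁ b₂ : 𝕀, b₁ ≤ b₂ → ρ b₂ ≤ ρ b₁ := by
  set Z : Matrix 𝕀 𝕀 ℝ := Matrix.of fun a b : 𝕀 => if a ≤ b then (1 : ℝ) else 0 with hZ
  set f : 𝕀 → ℝ := P.mulVec (M.mulVec ρ) with hf
  have hfix : Z.mulVec f = ρ := by
    have h1 : Matrix.vecMul ρ Q = Qᵀ.mulVec ρ := by
      rw [← Matrix.transpose_transpose Q, Matrix.vecMul_transpose, Matrix.transpose_transpose]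
    rw [h1, hQ] at hinv
    rw [hf, Matrix.mulVec_mulVec, Matrix.mulVec_mulVec, hinv]
  have hfpos : ∀ c, 0 ≤ f c := by
    intro c
    have : f c = ∑ e, Mᵀ.mulVec (fun d => P c d) e * ρ e := by
      simp only [hf, Matrix.mulVec, dotProduct, Matrix.transpose_apply,
        Finset.mul_sum, Finset.sum_mul]
      rw [Finset.sum_comm]
      exact Finset.sum_congr rfl fun e _ => Finset.sum_congr rfl fun d _ => by ring
    rw [this]
    exact Finset.sum_nonneg fun e _ => mul_nonneg (hrow c e) (hρ e)
  have hρ_eq : ∀ a, ρ a = ∑ b ∈ Finset.univ.filter (fun b => a ≤ b), f b := by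
    intro a
    rw [← hfix]
    simp only [Matrix.mulVec, dotProduct, hZ, Matrix.of_apply]
    rw [Finset.sum_filter]
    congr 1; ext b
    split <;> simp
  intro b₁ b₂ h
  rw [hρ_eq b₁, hρ_eq b₂]
  apply Finset.sum_le_sum_of_subset_of_nonneg
  · intro x hx
    simp only [Finset.mem_filter, Finset.mem_univ, true_and] at *
    exact le_trans h hx
  · intro x _ _
    exact hfpos x
end

section
/- Coarse-graining duality: let 𝕀 be a finite set, ∼ an equivalence relation on 𝕀 with quotient 𝕀̃, and P, H real matrices indexed by 𝕀 × 𝕀 with H nonsingular. Suppose H, H⁻¹ and P are all compatible with ∼. Let Q be defined by Qᵀ = H⁻¹ P H. Then: (1) Qᵀ is compatible with ∼, so the matrix Q̃ on 𝕀̃ given by Q̃(ã,b̃) = ∑_{c ∈ ã} Q(c,b) (for any representative b of b̃) is well defined; (2) the coarse-graining H̃ is nonsingular, its inverse equals the coarse-graining of H⁻¹, and the duality relation Q̃ᵀ = H̃⁻¹ P̃ H̃ holds; (3) if Q ≥ 0 entrywise then Q̃ ≥ 0 entrywise. -/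
open Finset Matrix

/-- A matrix `H` on a finite set `𝕀` is compatible with the equivalence relation
`s` if for `a₁ ∼ a₂` the sums of `H(a₁,·)` and `H(a₂,·)` over each equivalence
class coincide. -/
def MatCompat {𝕀 : Type*} [Fintype 𝕀] (s : Setoid 𝕀) [DecidableEq (Quotient s)]
    (H : Matrix 𝕀 𝕀 ℝ) : Prop :=
  ∀ a₁ a₂ : 𝕀, s.r a₁ a₂ → ∀ y : Quotient s,
    ∑ c ∈ Finset.univ.filter (fun c => Quotient.mk s c = y), H a₁ c =
      ∑ c ∈ Finset.univ.filter (fun c => Quotient.mk s c = y), H a₂ c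

/-- The coarse-graining of a matrix `H` compatible with `s`:
`H̃(ã,b̃) = ∑_{c ∈ b̃} H(a,c)` for a representative `a` of `ã`. -/
noncomputable def matCG {𝕀 : Type*} [Fintype 𝕀] (s : Setoid 𝕀)
    [DecidableEq (Quotient s)] (H : Matrix 𝕀 𝕀 ℝ) :
    Matrix (Quotient s) (Quotient s) ℝ :=
  fun x y => ∑ c ∈ Finset.univ.filter (fun c => Quotient.mk s c = y), H x.out c

section helpers
variable {𝕀 : Type*} [Fintype 𝕀] (s : Setoid 𝕀) [DecidableEq (Quotient s)]
  [Fintype (Quotient s)]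

lemma matCG_eq_sum {A : Matrix 𝕀 𝕀 ℝ} (hA : MatCompat s A) (a : 𝕀) (y : Quotient s) :
    matCG s A (Quotient.mk s a) y =
      ∑ c ∈ Finset.univ.filter (fun c => Quotient.mk s c = y), A a c := by
  apply hA
  exact Quotient.exact ((Quotient.mk s a).out_eq)

lemma key {A B : Matrix 𝕀 𝕀 ℝ} (hB : MatCompat s B) (a : 𝕀) (y : Quotient s) :
    ∑ c ∈ Finset.univ.filter (fun c => Quotient.mk s c = y), (A * B) a c =
      ∑ x : Quotient s,
        (∑ d ∈ Finset.univ.filter (fun d => Quotient.mk s d = x), A a d) * matCG s B x y := by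
  have h1 : ∑ c ∈ Finset.univ.filter (fun c => Quotient.mk s c = y), (A * B) a c
      = ∑ d : 𝕀, A a d * matCG s B (Quotient.mk s d) y := by
    simp only [Matrix.mul_apply]
    rw [Finset.sum_comm]
    refine Finset.sum_congr rfl fun d _ => ?_
    rw [matCG_eq_sum s hB, Finset.mul_sum]
  rw [h1, ← Finset.sum_fiberwise Finset.univ (Quotient.mk s)
    (fun d => A a d * matCG s B (Quotient.mk s d) y)]
  refine Finset.sum_congr rfl fun x _ => ?_
  rw [Finset.sum_mul]
  refine Finset.sum_congr rfl fun d hd => ?_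
  rw [Finset.mem_filter] at hd
  rw [hd.2]

set_option linter.unusedSectionVars false

lemma compat_mul {A B : Matrix 𝕀 𝕀 ℝ} (hA : MatCompat s A) (hB : MatCompat s B) :
    MatCompat s (A * B) := by
  intro a₁ a₂ h y
  rw [key s hB, key s hB]
  refine Finset.sum_congr rfl fun x _ => ?_
  rw [hA a₁ a₂ h x]

lemma matCG_mul {A B : Matrix 𝕀 𝕀 ℝ} (hA : MatCompat s A) (hB : MatCompat s B) :
    matCG s (A * B) = matCG s A * matCG s B := by
  ext q y
  show (∑ c ∈ Finset.univ.filter (fun c => Quotient.mk s c = y), (A * B) q.out c) = _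
  rw [key s hB]
  rfl

lemma matCG_one [DecidableEq 𝕀] : matCG s (1 : Matrix 𝕀 𝕀 ℝ) = 1 := by
  ext q y
  show (∑ c ∈ Finset.univ.filter (fun c => Quotient.mk s c = y), (1 : Matrix 𝕀 𝕀 ℝ) q.out c) = _
  simp only [Matrix.one_apply]
  rw [Finset.sum_ite_eq]
  simp [Quotient.out_eq, eq_comm]
end helpers

/-- Coarse-graining duality: if `H`, `H⁻¹` and `P` are compatible with `∼` and
`Qᵀ = H⁻¹ P H`, then (1) `Qᵀ` is compatible with `∼`, so the coarse-graining
`Q̃(ã,b̃) = ∑_{c∈ã} Q(c,b)` is well defined; (2) `H̃` is nonsingular with inverse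
the coarse-graining of `H⁻¹`, and `Q̃ᵀ = H̃⁻¹ P̃ H̃`; (3) `Q ≥ 0` implies `Q̃ ≥ 0`. -/
theorem coarse_graining_duality {𝕀 : Type*} [Fintype 𝕀] [DecidableEq 𝕀]
    (s : Setoid 𝕀) [DecidableEq (Quotient s)] [Fintype (Quotient s)]
    (H M P Q : Matrix 𝕀 𝕀 ℝ)
    (hMH : M * H = 1) (hHM : H * M = 1)
    (hHc : MatCompat s H) (hMc : MatCompat s M) (hPc : MatCompat s P)
    (hQ : Qᵀ = M * P * H) :
    MatCompat s Qᵀ ∧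
    (matCG s H * matCG s M = 1 ∧ matCG s M * matCG s H = 1 ∧
      matCG s Qᵀ = matCG s M * matCG s P * matCG s H) ∧
    ((∀ a b, 0 ≤ Q a b) → ∀ x y, 0 ≤ (matCG s Qᵀ)ᵀ x y) := by
  have hMPc : MatCompat s (M * P) := compat_mul s hMc hPc
  have hQc : MatCompat s Qᵀ := hQ ▸ compat_mul s hMPc hHc
  refine ⟨hQc, ⟨?_, ?_, ?_⟩, ?_⟩
  · rw [← matCG_mul s hHc hMc, hHM, matCG_one]
  · rw [← matCG_mul s hMc hHc, hMH, matCG_one]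
  · rw [hQ, matCG_mul s hMPc hHc, matCG_mul s hMc hPc]
  · intro hQpos x y
    show 0 ≤ matCG s Qᵀ y x
    exact Finset.sum_nonneg fun c _ => hQpos c _
end

section
/- Let (𝕀,⪯) be a finite partially ordered set with zeta matrix Z and Möbius matrix Z⁻¹, and let ∼ be an equivalence relation on 𝕀. Suppose that for every pair a₁ ∼ a₂ there exists a bijection π : 𝕀 → 𝕀 such that (1) π(a₁) = a₂; (2) π is an order automorphism: c ⪯ d ⟺ π(c) ⪯ π(d); (3) π maps every equivalence class of ∼ onto itself. Then Z, Zᵀ, Z⁻¹ and (Zᵀ)⁻¹ are all compatible with ∼, i.e. for all a₁ ∼ a₂ and every equivalence class b̃: ∑_{c∈b̃} Z(a₁,c) = ∑_{c∈b̃} Z(a₂,c), and likewise with Z replaced by Zᵀ, Z⁻¹ and (Zᵀ)⁻¹. -/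
open Finset Matrix

lemma compat_of_equivariant {𝕀 : Type*} [Fintype 𝕀] (s : Setoid 𝕀)
    [DecidableEq (Quotient s)] (H : Matrix 𝕀 𝕀 ℝ)
    (h : ∀ a₁ a₂ : 𝕀, s.r a₁ a₂ → ∃ π : 𝕀 ≃ 𝕀, π a₁ = a₂ ∧
      (∀ c d : 𝕀, H (π c) (π d) = H c d) ∧
      ∀ c : 𝕀, Quotient.mk s (π c) = Quotient.mk s c) :
    MatCompat s H := by
  intro a₁ a₂ hr y
  obtain ⟨π, hπa, hH, hcl⟩ := h a₁ a₂ hr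
  rw [← hπa]
  refine Finset.sum_bij' (fun c _ => π c) (fun c _ => π.symm c) ?_ ?_ ?_ ?_ ?_
  · intro c hc
    simp only [Finset.mem_filter, Finset.mem_univ, true_and] at hc ⊢
    rw [hcl, hc]
  · intro c hc
    simp only [Finset.mem_filter, Finset.mem_univ, true_and] at hc ⊢
    rw [← hc, ← hcl (π.symm c), Equiv.apply_symm_apply]
  · intro c _; exact π.symm_apply_apply c
  · intro c _; exact π.apply_symm_apply c
  · intro c _; exact (hH a₁ c).symm

/-- If for every pair `a₁ ∼ a₂` there is an order automorphism `π` of the finite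
poset `(𝕀,⪯)` with `π(a₁) = a₂` that maps every equivalence class of `∼` onto
itself, then the zeta matrix `Z`, its transpose `Zᵀ`, the Möbius matrix `Z⁻¹`
and `(Zᵀ)⁻¹ = (Z⁻¹)ᵀ` are all compatible with `∼`. -/
theorem automorphisms_give_compatibility {𝕀 : Type*} [Fintype 𝕀] [DecidableEq 𝕀]
    [PartialOrder 𝕀] [DecidableRel (· ≤ · : 𝕀 → 𝕀 → Prop)]
    (s : Setoid 𝕀) [DecidableEq (Quotient s)]
    (M : Matrix 𝕀 𝕀 ℝ)
    (hMZ : M * (Matrix.of fun a b : 𝕀 => if a ≤ b then (1 : ℝ) else 0) = 1)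
    (hZM : (Matrix.of fun a b : 𝕀 => if a ≤ b then (1 : ℝ) else 0) * M = 1)
    (hauto : ∀ a₁ a₂ : 𝕀, s.r a₁ a₂ → ∃ π : 𝕀 ≃ 𝕀,
      π a₁ = a₂ ∧ (∀ c d : 𝕀, c ≤ d ↔ π c ≤ π d) ∧
      ∀ c : 𝕀, Quotient.mk s (π c) = Quotient.mk s c) :
    MatCompat s (Matrix.of fun a b : 𝕀 => if a ≤ b then (1 : ℝ) else 0) ∧
    MatCompat s (Matrix.of fun a b : 𝕀 => if a ≤ b then (1 : ℝ) else 0)ᵀ ∧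
    MatCompat s M ∧ MatCompat s Mᵀ := by
  set Z : Matrix 𝕀 𝕀 ℝ := Matrix.of fun a b : 𝕀 => if a ≤ b then (1 : ℝ) else 0 with hZ
  -- Z equivariance
  have hZeq : ∀ (π : 𝕀 ≃ 𝕀), (∀ c d : 𝕀, c ≤ d ↔ π c ≤ π d) →
      ∀ c d : 𝕀, Z (π c) (π d) = Z c d := by
    intro π hπ c d
    simp only [hZ, Matrix.of_apply]
    by_cases h : c ≤ d
    · rw [if_pos h, if_pos ((hπ c d).mp h)]
    · rw [if_neg h, if_neg (fun hh => h ((hπ c d).mpr hh))]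
  -- M equivariance
  have hMeq : ∀ (π : 𝕀 ≃ 𝕀), (∀ c d : 𝕀, c ≤ d ↔ π c ≤ π d) →
      ∀ c d : 𝕀, M (π c) (π d) = M c d := by
    intro π hπ
    set M' : Matrix 𝕀 𝕀 ℝ := Matrix.of fun a b => M (π a) (π b) with hM'
    have hM'Z : M' * Z = 1 := by
      ext a b
      have : (M' * Z) a b = ∑ c, M (π a) (π c) * Z (π c) (π b) := by
        simp only [Matrix.mul_apply, hM', Matrix.of_apply]
        exact Finset.sum_congr rfl fun c _ => by rw [hZeq π hπ c b]
      rw [this, Equiv.sum_comp π (fun d => M (π a) d * Z d (π b))]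
      have := congrFun (congrFun hMZ (π a)) (π b)
      rw [Matrix.mul_apply] at this
      rw [this]
      simp only [Matrix.one_apply]
      by_cases h : a = b
      · rw [if_pos h, if_pos (by rw [h])]
      · rw [if_neg h, if_neg (fun hh => h (π.injective hh))]
    have : M' = M := by
      calc M' = M' * (Z * M) := by rw [hZM, Matrix.mul_one]
      _ = (M' * Z) * M := by rw [Matrix.mul_assoc]
      _ = M := by rw [hM'Z, Matrix.one_mul]
    intro c d
    exact congrFun (congrFun this c) d
  refine ⟨?_, ?_, ?_, ?_⟩
  · exact compat_of_equivariant s Z fun a₁ a₂ hr => by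
      obtain ⟨π, h1, h2, h3⟩ := hauto a₁ a₂ hr
      exact ⟨π, h1, hZeq π h2, h3⟩
  · exact compat_of_equivariant s Zᵀ fun a₁ a₂ hr => by
      obtain ⟨π, h1, h2, h3⟩ := hauto a₁ a₂ hr
      exact ⟨π, h1, fun c d => hZeq π h2 d c, h3⟩
  · exact compat_of_equivariant s M fun a₁ a₂ hr => by
      obtain ⟨π, h1, h2, h3⟩ := hauto a₁ a₂ hr
      exact ⟨π, h1, hMeq π h2, h3⟩
  · exact compat_of_equivariant s Mᵀ fun a₁ a₂ hr => by
      obtain ⟨π, h1, h2, h3⟩ := hauto a₁ a₂ hr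
      exact ⟨π, h1, fun c d => hMeq π h2 d c, h3⟩
end
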